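/- arXiv:2601.02866 — 3 statements merged into one kernel-verified Lean document; each statement's English description precedes it below -/
import Mathlib

section
/- For every x > 0 and y ∈ ℝ, the integral over τ ∈ (0,∞) of cos(τy)·K_{iτ}(x) dτ equals (π/2)·exp(−x·cosh y), where K_{iτ} denotes the modified Bessel function of the second kind of purely imaginary order iτ. -/
/-!
The function `g t = exp (-x cosh t)` is even and integrable, and so are its first two
derivatives; hence `|w|² |𝓕 g w|` is bounded and `𝓕 g` is integrable. For an even real function
the Fourier transform is a cosine transform, and here `𝓕 g w = 2 K_{2πiw}(x)`. Fourier inversion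
at `y` then gives `exp (-x cosh y) = 2 ∫_0^∞ 2 K_{2πiw}(x) cos (2πwy) dw`, and the substitution
`τ = 2πw` turns this into the claim.
-/

open MeasureTheory Real

/-- Macdonald function of purely imaginary order `iτ`:
`K_{iτ}(x) = ∫_0^∞ exp(−x cosh t) cos(τ t) dt`. -/
noncomputable def Kit (τ x : ℝ) : ℝ :=
  ∫ t in Set.Ioi (0:ℝ), Real.exp (-x * Real.cosh t) * Real.cos (τ * t)

open Set FourierTransform

theorem integrable_fourier_of_hasDerivAt {E : Type*} [NormedAddCommGroup E] [NormedSpace ℂ E]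
    {f f' f'' : ℝ → E} (hf' : ∀ t, HasDerivAt f (f' t) t) (hf'' : ∀ t, HasDerivAt f' (f'' t) t)
    (hf : Integrable f) (hf'i : Integrable f') (hf''i : Integrable f'') :
    Integrable (𝓕 f) := by
  have hd : deriv f = f' := funext fun t => (hf' t).deriv
  have hdd : deriv f' = f'' := funext fun t => (hf'' t).deriv
  have hnorm : ∀ w : ℝ, ‖𝓕 f'' w‖ = (2 * π * |w|) ^ 2 * ‖𝓕 f w‖ := by
    intro w
    rw [← hdd, Real.fourier_deriv hf'i (fun t => (hf'' t).differentiableAt) (hdd ▸ hf''i), ← hd,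
      Real.fourier_deriv hf (fun t => (hf' t).differentiableAt) (hd ▸ hf'i)]
    simp only [norm_smul, Complex.norm_mul, Complex.norm_ofNat, Complex.norm_real, norm_eq_abs,
      abs_of_pos pi_pos, Complex.norm_I, mul_one]
    ring
  have hbound : ∀ w : ℝ, (1 + w ^ 2) * ‖𝓕 f w‖ ≤ (∫ t, ‖f t‖) + ∫ t, ‖f'' t‖ := by
    intro w
    have hf_le : ‖𝓕 f w‖ ≤ ∫ t, ‖f t‖ := VectorFourier.norm_fourierIntegral_le_integral_norm _ _ _ _ _
    have hf''_le : ‖𝓕 f'' w‖ ≤ ∫ t, ‖f'' t‖ :=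
      VectorFourier.norm_fourierIntegral_le_integral_norm _ _ _ _ _
    have hw : w ^ 2 ≤ (2 * π * |w|) ^ 2 := by
      rw [mul_pow, sq_abs]
      exact le_mul_of_one_le_left (sq_nonneg w) (by nlinarith [pi_gt_three])
    nlinarith [norm_nonneg (𝓕 f w), hnorm w]
  refine (integrable_inv_one_add_sq.const_mul ((∫ t, ‖f t‖) + ∫ t, ‖f'' t‖)).mono'
    (VectorFourier.fourierIntegral_continuous Real.continuous_fourierChar
      (by exact continuous_inner) hf).aestronglyMeasurable (Filter.Eventually.of_forall fun w => ?_)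
  rw [← div_eq_mul_inv, le_div_iff₀ (by positivity), mul_comm]
  exact hbound w

noncomputable def cosineTransform (g : ℝ → ℝ) (w : ℝ) : ℝ :=
  2 * ∫ t in Ioi 0, g t * cos (2 * π * w * t)

theorem fourier_ofReal_eq_cosineTransform {g : ℝ → ℝ} (hg : Function.Even g) (hgi : Integrable g)
    (w : ℝ) : 𝓕 (fun t => (g t : ℂ)) w = cosineTransform g w := by
  set e : ℝ → ℂ := fun t => Complex.exp (↑(-2 * π * t * w) * Complex.I) • (g t : ℂ)
  have he : Integrable e := by
    have hG : Integrable (fun t => (g t : ℂ)) := hgi.ofReal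
    simpa only [e, smul_eq_mul] using hG.bdd_mul (c := 1)
      (f := fun t => Complex.exp (↑(-2 * π * t * w) * Complex.I)) (by fun_prop)
      (Filter.Eventually.of_forall fun t => by rw [Complex.norm_exp_ofReal_mul_I])
  have hpair : ∀ t, e t + e (-t) = ↑(2 * (g t * cos (2 * π * w * t))) := by
    intro t
    simp only [e, hg t, smul_eq_mul]
    push_cast
    rw [mul_left_comm, Complex.two_cos]
    ring_nf
  have h2 : 2 * 𝓕 (fun t => (g t : ℂ)) w = ↑(∫ t, 2 * (g t * cos (2 * π * w * t))) := by
    rw [Real.fourier_real_eq_integral_exp_smul, two_mul]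
    nth_rewrite 2 [← integral_neg_eq_self]
    rw [← integral_add he he.comp_neg, ← integral_complex_ofReal]
    simp_rw [hpair]
  have heven : ∀ t, 2 * (g |t| * cos (2 * π * w * |t|)) = 2 * (g t * cos (2 * π * w * t)) := by
    intro t
    rcases abs_choice t with h | h <;> simp [h, hg t]
  rw [← integral_congr_ae (Filter.Eventually.of_forall heven),
    integral_comp_abs (f := fun t => 2 * (g t * cos (2 * π * w * t))), integral_const_mul] at h2
  rw [cosineTransform]
  push_cast at h2 ⊢
  linear_combination h2 / 2

theorem cosineTransform_neg (g : ℝ → ℝ) (w : ℝ) : cosineTransform g (-w) = cosineTransform g w := by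
  simp only [cosineTransform, mul_neg, neg_mul, cos_neg]

theorem integrable_cosineTransform_of_hasDerivAt {g g' g'' : ℝ → ℝ} (hg : Function.Even g)
    (hg' : ∀ t, HasDerivAt g (g' t) t) (hg'' : ∀ t, HasDerivAt g' (g'' t) t)
    (hgi : Integrable g) (hg'i : Integrable g') (hg''i : Integrable g'') :
    Integrable (cosineTransform g) := by
  have h := integrable_fourier_of_hasDerivAt (fun t => (hg' t).ofReal_comp)
    (fun t => (hg'' t).ofReal_comp) hgi.ofReal hg'i.ofReal hg''i.ofReal
  simp_rw [funext (fourier_ofReal_eq_cosineTransform hg hgi)] at h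
  simpa using h.re

theorem cosineTransform_cosineTransform {g : ℝ → ℝ} (hg : Function.Even g) (hgi : Integrable g)
    (hĝ : Integrable (cosineTransform g)) {y : ℝ} (hy : ContinuousAt g y) :
    cosineTransform (cosineTransform g) y = g y := by
  have h𝓕 := funext (fourier_ofReal_eq_cosineTransform hg hgi)
  have hinv := hgi.ofReal.fourierInv_fourier_eq (f := fun t => (g t : ℂ)) (h𝓕 ▸ hĝ.ofReal)
    (Complex.continuous_ofReal.continuousAt.comp hy)
  rw [Real.fourierInv_eq_fourier_neg, h𝓕,
    fourier_ofReal_eq_cosineTransform (cosineTransform_neg g) hĝ, cosineTransform_neg] at hinv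
  exact_mod_cast hinv

theorem cosineTransform_comp_two_pi_mul (F : ℝ → ℝ) (y : ℝ) :
    cosineTransform (fun w => F (2 * π * w)) y = π⁻¹ * ∫ τ in Ioi 0, F τ * cos (τ * y) := by
  have h : ∀ w, F (2 * π * w) * cos (2 * π * y * w) = F (2 * π * w) * cos (2 * π * w * y) := by
    intro w; ring_nf
  rw [cosineTransform, integral_congr_ae (Filter.Eventually.of_forall h),
    integral_comp_mul_left_Ioi (fun τ => F τ * cos (τ * y)) 0 two_pi_pos, mul_zero, smul_eq_mul]
  ring

theorem sq_div_four_le_cosh (t : ℝ) : t ^ 2 / 4 ≤ cosh t := by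
  rw [← cosh_abs, cosh_eq]
  nlinarith [quadratic_le_exp_of_nonneg (abs_nonneg t), exp_pos (-|t|), sq_abs t, abs_nonneg t]

theorem cosh_le_exp_abs (t : ℝ) : cosh t ≤ exp |t| := by
  rw [← cosh_abs, cosh_eq]
  nlinarith [exp_le_exp.2 (neg_le_self (abs_nonneg t))]

theorem abs_sinh_le_cosh (t : ℝ) : |sinh t| ≤ cosh t := by
  rw [abs_le]
  constructor <;> nlinarith [cosh_add_sinh t, cosh_sub_sinh t, exp_pos t, exp_pos (-t)]

theorem integrable_exp_mul_abs_mul_exp_neg_mul_cosh {x : ℝ} (hx : 0 < x) (a : ℝ) :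
    Integrable (fun t => exp (a * |t|) * exp (-x * cosh t)) := by
  refine ((integrable_exp_neg_mul_sq (by positivity : 0 < x / 8)).const_mul
    (exp (2 * a ^ 2 / x))).mono' (by fun_prop) (Filter.Eventually.of_forall fun t => ?_)
  rw [norm_of_nonneg (by positivity), ← exp_add, ← exp_add]
  apply exp_le_exp.2
  have hamgm : a * |t| ≤ x / 8 * t ^ 2 + 2 * a ^ 2 / x := by
    rw [← sub_nonneg, ← sq_abs t]
    have : x / 8 * |t| ^ 2 + 2 * a ^ 2 / x - a * |t| = (x * |t| - 4 * a) ^ 2 / (8 * x) := by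
      field_simp
      ring
    rw [this]
    positivity
  nlinarith [sq_div_four_le_cosh t]

theorem integrable_mul_exp_neg_mul_cosh {x : ℝ} (hx : 0 < x) {p : ℝ → ℝ} (hp : Continuous p)
    {c : ℝ} (hpc : ∀ t, |p t| ≤ c * cosh t ^ 2) :
    Integrable (fun t => p t * exp (-x * cosh t)) := by
  refine ((integrable_exp_mul_abs_mul_exp_neg_mul_cosh hx 2).const_mul c).mono' (by fun_prop)
    (Filter.Eventually.of_forall fun t => ?_)
  have hcosh : cosh t ^ 2 ≤ exp (2 * |t|) := by
    rw [mul_comm, exp_mul, rpow_two]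
    exact pow_le_pow_left₀ (cosh_pos t).le (cosh_le_exp_abs t) 2
  rw [norm_mul, norm_of_nonneg (exp_pos _).le, Real.norm_eq_abs, ← mul_assoc]
  have hc : 0 ≤ c := nonneg_of_mul_nonneg_left ((abs_nonneg _).trans (hpc 0)) (by positivity)
  gcongr
  exact (hpc t).trans (by gcongr)

theorem hasDerivAt_exp_neg_mul_cosh (x t : ℝ) :
    HasDerivAt (fun t => exp (-x * cosh t)) (-x * sinh t * exp (-x * cosh t)) t :=
  ((hasDerivAt_cosh t).const_mul (-x)).exp.congr_deriv (by ring)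

theorem hasDerivAt_neg_mul_sinh_mul_exp_neg_mul_cosh (x t : ℝ) :
    HasDerivAt (fun t => -x * sinh t * exp (-x * cosh t))
      ((x ^ 2 * sinh t ^ 2 - x * cosh t) * exp (-x * cosh t)) t :=
  (((hasDerivAt_sinh t).const_mul (-x)).mul (hasDerivAt_exp_neg_mul_cosh x t)).congr_deriv
    (by ring)

theorem integrable_exp_neg_mul_cosh {x : ℝ} (hx : 0 < x) :
    Integrable (fun t => exp (-x * cosh t)) := by
  simpa using integrable_mul_exp_neg_mul_cosh hx (p := 1) (c := 1) continuous_const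
    fun t => by rw [Pi.one_apply, abs_one, one_mul]; exact one_le_pow₀ (one_le_cosh t)

theorem integrable_neg_mul_sinh_mul_exp_neg_mul_cosh {x : ℝ} (hx : 0 < x) :
    Integrable (fun t => -x * sinh t * exp (-x * cosh t)) := by
  refine integrable_mul_exp_neg_mul_cosh hx (c := x) (by fun_prop) fun t => ?_
  rw [abs_mul, abs_neg, abs_of_pos hx]
  gcongr
  nlinarith [abs_sinh_le_cosh t, one_le_cosh t]

theorem integrable_sq_mul_sinh_sq_sub_mul_cosh_mul_exp_neg_mul_cosh {x : ℝ} (hx : 0 < x) :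
    Integrable (fun t => (x ^ 2 * sinh t ^ 2 - x * cosh t) * exp (-x * cosh t)) := by
  refine integrable_mul_exp_neg_mul_cosh hx (c := x ^ 2 + x) (by fun_prop) fun t => ?_
  have hsinh : sinh t ^ 2 ≤ cosh t ^ 2 := by rw [sinh_sq]; linarith
  have hcosh : cosh t ≤ cosh t ^ 2 := by nlinarith [one_le_cosh t]
  rw [abs_le]
  constructor <;> nlinarith [sq_nonneg (sinh t), one_le_cosh t]

theorem integral_cos_Kit (x y : ℝ) (hx : 0 < x) :
    ∫ τ in Set.Ioi (0:ℝ), Real.cos (τ * y) * Kit τ x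
      = (Real.pi / 2) * Real.exp (-x * Real.cosh y) := by
  set g : ℝ → ℝ := fun t => exp (-x * cosh t)
  have hg : Function.Even g := fun t => by simp only [g, cosh_neg]
  have hĝ : cosineTransform g = fun w => 2 * Kit (2 * π * w) x := rfl
  have hinv := cosineTransform_cosineTransform (y := y) hg (integrable_exp_neg_mul_cosh hx)
    (integrable_cosineTransform_of_hasDerivAt hg (hasDerivAt_exp_neg_mul_cosh x)
      (hasDerivAt_neg_mul_sinh_mul_exp_neg_mul_cosh x) (integrable_exp_neg_mul_cosh hx)
      (integrable_neg_mul_sinh_mul_exp_neg_mul_cosh hx)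
      (integrable_sq_mul_sinh_sq_sub_mul_cosh_mul_exp_neg_mul_cosh hx))
    (by fun_prop : Continuous g).continuousAt
  rw [hĝ, cosineTransform_comp_two_pi_mul (fun τ => 2 * Kit τ x)] at hinv
  have h2 : ∀ τ, 2 * Kit τ x * cos (τ * y) = 2 * (cos (τ * y) * Kit τ x) := fun τ => by ring
  simp_rw [h2, integral_const_mul] at hinv
  change _ = π / 2 * g y
  rw [← hinv, ← mul_assoc, ← mul_assoc, show π / 2 * π⁻¹ * 2 = 1 by field_simp, one_mul]
end

section
/- With p_n(x) = (−1)^n e^x A^n(e^{−x}), where (A f)(x) = x²f(x) − x·(x f′(x))′, the leading coefficient of the degree-n polynomial p_n is (−1)^n·(2n−1)!! (double factorial), i.e. p_n(x) = (−1)^n (2n−1)!!·x^n + lower order terms. -/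
open Real

/-- The operator `(A f)(x) = x² f(x) − x (x f′(x))′`. -/
noncomputable def opA (f : ℝ → ℝ) : ℝ → ℝ :=
  fun x => x^2 * f x - x * deriv (fun y => y * deriv f y) x

/-- `p_n(x) = (−1)^n e^x (Aⁿ e^{−x})(x)`. -/
noncomputable def p (n : ℕ) (x : ℝ) : ℝ :=
  (-1:ℝ)^n * Real.exp x * (opA^[n] (fun y => Real.exp (-y))) x

/-!
Conjugating by `e^{-x}`, the operator `A` acts on `P(x) e^{-x}` through the polynomial operator
`T P = x P + 2 x² P' − x P' − x² P''` (`opAPoly`), so `p_n = (−1)ⁿ Tⁿ 1`. On coefficients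
`(T P)_{k+1} = (2k+1) P_k − (k+1)² P_{k+1}`, so `T` maps polynomials of degree `≤ k` to
polynomials of degree `≤ k+1` and multiplies the coefficient of `x^k` by `2k+1`; starting from
`1` this produces `(2n−1)!!`.
-/

open Polynomial
open scoped Nat

theorem degree_sub_C_mul_X_pow_coeff_lt {R : Type*} [Ring R] {P : R[X]} {n : ℕ}
    (h : P.natDegree ≤ n) : (P - C (P.coeff n) * X ^ n).degree < (n : WithBot ℕ) := by
  rw [degree_lt_iff_coeff_zero]
  intro m hm
  rw [coeff_sub, coeff_C_mul_X_pow]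
  rcases (show n ≤ m by exact_mod_cast hm).eq_or_lt with rfl | hlt
  · simp
  · rw [if_neg hlt.ne', coeff_eq_zero_of_natDegree_lt (h.trans_lt hlt), sub_zero]

section OpAPoly

variable {R : Type*} [CommRing R]

noncomputable def opAPoly (P : R[X]) : R[X] :=
  X * P + 2 * X ^ 2 * derivative P - X * derivative P - X ^ 2 * derivative (derivative P)

theorem coeff_opAPoly_succ (P : R[X]) (k : ℕ) :
    (opAPoly P).coeff (k + 1) = (2 * k + 1) * P.coeff k - ((k : R) + 1) ^ 2 * P.coeff (k + 1) := by
  cases k with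
  | zero => simp [opAPoly, pow_two, mul_assoc, coeff_derivative]
  | succ k =>
    simp only [opAPoly, pow_two, mul_assoc, coeff_add, coeff_sub, coeff_X_mul, coeff_derivative,
      coeff_ofNat_mul]
    push_cast
    ring

theorem natDegree_opAPoly_le {P : R[X]} {n : ℕ} (h : P.natDegree ≤ n) :
    (opAPoly P).natDegree ≤ n + 1 := by
  rw [natDegree_le_iff_coeff_eq_zero]
  intro m hm
  obtain ⟨k, rfl⟩ : ∃ k, m = k + 1 := ⟨m - 1, by omega⟩
  rw [coeff_opAPoly_succ, coeff_eq_zero_of_natDegree_lt (by omega),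
    coeff_eq_zero_of_natDegree_lt (by omega : P.natDegree < k + 1)]
  ring

theorem coeff_opAPoly_of_natDegree_le {P : R[X]} {n : ℕ} (h : P.natDegree ≤ n) :
    (opAPoly P).coeff (n + 1) = (2 * n + 1) * P.coeff n := by
  rw [coeff_opAPoly_succ, coeff_eq_zero_of_natDegree_lt (n := n + 1) (by omega), mul_zero,
    sub_zero]

theorem natDegree_iterate_opAPoly_one_le (n : ℕ) : (opAPoly^[n] (1 : R[X])).natDegree ≤ n := by
  induction n with
  | zero => simp
  | succ n ih => rw [Function.iterate_succ_apply']; exact natDegree_opAPoly_le ih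

theorem coeff_iterate_opAPoly_one (n : ℕ) : (opAPoly^[n] (1 : R[X])).coeff n = (2 * n - 1)‼ := by
  induction n with
  | zero => simp
  | succ n ih =>
    rw [Function.iterate_succ_apply', coeff_opAPoly_of_natDegree_le
      (natDegree_iterate_opAPoly_one_le n), ih, show 2 * (n + 1) - 1 = 2 * n + 1 by omega,
      Nat.doubleFactorial_add_one]
    push_cast
    ring

end OpAPoly

theorem hasDerivAt_eval_mul_exp_neg (P : ℝ[X]) (x : ℝ) :
    HasDerivAt (fun y => P.eval y * exp (-y)) ((derivative P - P).eval x * exp (-x)) x := by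
  refine ((P.hasDerivAt x).mul (hasDerivAt_neg x).exp).congr_deriv ?_
  rw [eval_sub]
  ring

theorem deriv_eval_mul_exp_neg (P : ℝ[X]) :
    deriv (fun y => P.eval y * exp (-y)) = fun x => (derivative P - P).eval x * exp (-x) :=
  funext fun x => (hasDerivAt_eval_mul_exp_neg P x).deriv

theorem opA_eval_mul_exp_neg (P : ℝ[X]) :
    opA (fun y => P.eval y * exp (-y)) = fun x => (opAPoly P).eval x * exp (-x) := by
  have hxf : (fun y => y * deriv (fun y => P.eval y * exp (-y)) y)
      = fun y => (X * (derivative P - P)).eval y * exp (-y) := by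
    funext y; rw [deriv_eval_mul_exp_neg, eval_mul, eval_X, mul_assoc]
  funext x
  rw [opA, hxf, deriv_eval_mul_exp_neg]
  simp only [opAPoly, derivative_mul, derivative_X, derivative_sub, eval_add, eval_sub, eval_mul,
    eval_X, eval_pow, eval_ofNat, one_mul]
  ring

theorem iterate_opA_exp_neg (n : ℕ) :
    opA^[n] (fun y => exp (-y)) = fun x => (opAPoly^[n] 1).eval x * exp (-x) := by
  induction n with
  | zero => simp
  | succ n ih => rw [Function.iterate_succ_apply', ih, Function.iterate_succ_apply',
      opA_eval_mul_exp_neg]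

theorem p_eq_eval_iterate_opAPoly (n : ℕ) (x : ℝ) :
    p n x = (-1) ^ n * (opAPoly^[n] 1).eval x := by
  rw [p, iterate_opA_exp_neg, mul_assoc, mul_left_comm (exp x), ← exp_add, add_neg_cancel,
    exp_zero, mul_one]

/-- The leading coefficient of `p_n` is `(−1)^n (2n−1)!!`. -/
theorem p_leading_coeff (n : ℕ) :
    ∃ q : Polynomial ℝ, q.degree < n ∧
      ∀ x : ℝ, p n x = (-1:ℝ)^n * (Nat.doubleFactorial (2*n - 1) : ℕ) * x^n + q.eval x := by
  let P : ℝ[X] := opAPoly^[n] 1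
  refine ⟨(-1) ^ n • (P - C (P.coeff n) * X ^ n), (degree_smul_le _ _).trans_lt
    (degree_sub_C_mul_X_pow_coeff_lt (natDegree_iterate_opAPoly_one_le n)), fun x => ?_⟩
  rw [p_eq_eval_iterate_opAPoly, ← coeff_iterate_opAPoly_one n]
  simp only [P, eval_smul, eval_sub, eval_mul, eval_C, eval_pow, eval_X]
  ring
end

section
/- With p_n(x) = (−1)^n e^x A^n(e^{−x}), the generating function identity exp(−2x·sinh²(y/2)) = Σ_{n=0}^∞ p_n(x)·y^{2n}/(2n)! holds for all x ∈ ℝ and all y in a neighborhood of 0 (the series has positive radius of convergence in y). -/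
open Real

/-!
Conjugating by `e⁻ˣ` turns `A` into `-B` with `B = x² D² + (x - 2x²) D - x` on polynomials, so
`p_n = Bⁿ 1`. With `c = cosh y`, the function `g(y) = exp (x (1 - c)) = exp (-2x sinh² (y/2))`
satisfies `∂²g/∂y² = B_x g`, both sides being `(x² (c² - 1) - x c) g`. Since `B_x` commutes with
`∂/∂y`, `g⁽²ⁿ⁾(0) = (Bⁿ 1)(x) = p_n(x)`, while the odd derivatives of the even function `g` vanish
at `0`; the identity is the Taylor expansion of `g` at `0`.

To avoid mixed partial derivatives, the commutation is carried out on polynomials in `x` and `c`.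
-/

open LinearMap

section OpB

variable {R A B : Type*} [CommSemiring R] [CommRing A] [Algebra R A] [CommRing B] [Algebra R B]

/-- For `D = d/dx` this is the operator `B` with `A (e⁻ˣ r) = -e⁻ˣ B r`. -/
def opB (x : A) (D : Module.End R A) : Module.End R A :=
  mulLeft R x ^ 2 * D ^ 2 + (mulLeft R x - 2 * mulLeft R x ^ 2) * D - mulLeft R x

theorem opB_apply (x : A) (D : Module.End R A) (a : A) :
    opB x D a = x ^ 2 * D (D a) + (x - 2 * x ^ 2) * D a - x * a := by
  simp only [opB, pow_mulLeft, sq D, two_mul, LinearMap.sub_apply, LinearMap.add_apply,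
    Module.End.mul_apply, mulLeft_apply]
  ring

theorem Commute.opB_right {E D : Module.End R A} {x : A} (hx : Commute E (mulLeft R x))
    (hD : Commute E D) : Commute E (opB x D) :=
  (((hx.pow_right 2).mul_right (hD.pow_right 2)).add_right
    ((hx.sub_right ((Commute.ofNat_right E 2).mul_right (hx.pow_right 2))).mul_right hD)).sub_right hx

theorem opB_comp_algHom (φ : A →ₐ[R] B) {D : Module.End R A} {D' : Module.End R B}
    (hD : D' ∘ₗ φ.toLinearMap = φ.toLinearMap ∘ₗ D) (x : A) :
    opB (φ x) D' ∘ₗ φ.toLinearMap = φ.toLinearMap ∘ₗ opB x D := by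
  ext a
  have h a : D' (φ a) = φ (D a) := LinearMap.congr_fun hD a
  simp only [coe_comp, AlgHom.coe_toLinearMap, Function.comp_apply, opB_apply, h, map_sub, map_add,
    map_mul, map_pow, map_ofNat]

end OpB

theorem Commute.pow_apply_eq {R M : Type*} [Semiring R] [AddCommMonoid M] [Module R M]
    {f g : Module.End R M} (hfg : Commute f g) {v : M} (h : f v = g v) (n : ℕ) :
    (f ^ n) v = (g ^ n) v := by
  induction n with
  | zero => rfl
  | succ n ih =>
    rw [pow_succ, Module.End.mul_apply, h, ← Module.End.mul_apply, (hfg.pow_left n).eq,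
      Module.End.mul_apply, ih, ← Module.End.mul_apply, ← pow_succ']

theorem LinearMap.commute_mulLeft_mulLeft {R A : Type*} [CommSemiring R] [CommRing A]
    [Algebra R A] (a b : A) : Commute (mulLeft R a) (mulLeft R b) :=
  LinearMap.ext fun _ => mul_left_comm _ _ _

namespace MvPolynomial

variable {R σ : Type*}

theorem pderiv_pderiv_comm [CommRing R] (i j : σ) (P : MvPolynomial σ R) :
    pderiv i (pderiv j P) = pderiv j (pderiv i P) := by
  classical
  -- the commutator of two derivations is a derivation, and this one kills every variable
  have h : ⁅pderiv i, pderiv j⁆ = (0 : Derivation R (MvPolynomial σ R) (MvPolynomial σ R)) :=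
    derivation_ext fun k => by
      rw [Derivation.commutator_apply, pderiv_X, pderiv_X]; simp [Pi.single_apply, apply_ite]
  rw [← sub_eq_zero, ← Derivation.commutator_apply, h, Derivation.zero_apply]

variable [CommSemiring R]

theorem commute_mulLeft_pderiv {i : σ} {a : MvPolynomial σ R} (ha : pderiv i a = 0) :
    Commute (mulLeft R a) (pderiv i).toLinearMap :=
  LinearMap.ext fun P => by simp [Derivation.leibniz, ha]

theorem polynomial_eval_aeval (v : σ → Polynomial R) (P : MvPolynomial σ R) (c : R) :
    (aeval v P).eval c = eval (fun i => (v i).eval c) P := by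
  rw [← Polynomial.coe_aeval_eq_eval, ← AlgHom.comp_apply, comp_aeval]; rfl

theorem derivative_aeval [Fintype σ] (v : σ → Polynomial R) (P : MvPolynomial σ R) :
    Polynomial.derivative (aeval v P) =
      ∑ i, aeval v (pderiv i P) * Polynomial.derivative (v i) := by
  classical
  induction P using MvPolynomial.induction_on with
  | C a => simp
  | add P Q hP hQ => simp [hP, hQ, add_mul, Finset.sum_add_distrib]
  | mul_X P j hP =>
    simp only [map_mul, aeval_X, Polynomial.derivative_mul, hP, Finset.sum_mul, Derivation.leibniz,
      pderiv_X, Pi.single_apply, apply_ite, smul_eq_mul, mul_one, mul_zero, map_add, map_zero,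
      add_mul, ite_mul, zero_mul, Finset.sum_add_distrib, Finset.sum_ite_eq, Finset.mem_univ,
      if_true]
    rw [add_comm]
    exact congrArg _ (Finset.sum_congr rfl fun _ _ => by ring)

end MvPolynomial

theorem AnalyticAt.exists_hasSum_iteratedDeriv {𝕜 F : Type*} [NontriviallyNormedField 𝕜]
    [CharZero 𝕜] [NormedAddCommGroup F] [NormedSpace 𝕜 F] [CompleteSpace F] {f : 𝕜 → F}
    {a : 𝕜} (hf : AnalyticAt 𝕜 f a) :
    ∃ r > 0, ∀ y : 𝕜, ‖y‖ < r →
      HasSum (fun n => (n.factorial : 𝕜)⁻¹ • y ^ n • iteratedDeriv n f a) (f (a + y)) := by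
  obtain ⟨p, R, hp⟩ := hf
  obtain ⟨r, hr0, hrR⟩ := ENNReal.lt_iff_exists_nnreal_btwn.mp hp.r_pos
  refine ⟨r, by exact_mod_cast hr0, fun y hy => ?_⟩
  have hyR : y ∈ Metric.eball 0 R := by
    rw [Metric.mem_eball, edist_zero_right]
    exact lt_trans (by exact_mod_cast hy) hrR
  simpa [iteratedFDeriv_apply_eq_iteratedDeriv_mul_prod] using hp.hasSum_iteratedFDeriv hyR

theorem HasSum.even_of_odd_eq_zero {M : Type*} [AddCommMonoid M] [TopologicalSpace M]
    {f : ℕ → M} {a : M} (hf : HasSum f a) (hodd : ∀ n, f (2 * n + 1) = 0) :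
    HasSum (fun n => f (2 * n)) a := by
  refine ((mul_right_injective₀ two_ne_zero).hasSum_iff fun k hk => ?_).mpr hf
  obtain ⟨n, rfl⟩ : Odd k := by simpa using hk
  exact hodd n

open MvPolynomial (X pderiv aeval)

/-! A polynomial `P` in `x = X 0` and `c = X 1` stands for `P(x, cosh y) · exp (x (1 - cosh y))`.
On these, `∂/∂x` acts as `dX`, `d/dy` as `sinh y • dC`, and `d²/dy²` as `dYY`, using
`sinh² y = c² - 1`. -/

noncomputable def dX : Module.End ℝ (MvPolynomial (Fin 2) ℝ) :=
  (pderiv 0).toLinearMap + mulLeft ℝ (1 - X 1)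

noncomputable def dC : Module.End ℝ (MvPolynomial (Fin 2) ℝ) :=
  (pderiv 1).toLinearMap - mulLeft ℝ (X 0)

noncomputable def dYY : Module.End ℝ (MvPolynomial (Fin 2) ℝ) :=
  mulLeft ℝ (X 1) * dC + mulLeft ℝ (X 1 ^ 2 - 1) * dC ^ 2

theorem commute_dC_dX : Commute dC dX := by
  refine LinearMap.ext fun P => ?_
  simp only [dC, dX, Module.End.mul_apply, LinearMap.add_apply, LinearMap.sub_apply,
    Derivation.coeFn_coe, mulLeft_apply, map_add, map_sub, Derivation.leibniz, smul_eq_mul,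
    Derivation.map_one_eq_zero, MvPolynomial.pderiv_X, Pi.single_eq_same,
    MvPolynomial.pderiv_pderiv_comm 0 1 P]
  ring

theorem commute_mulLeft_dX {a : MvPolynomial (Fin 2) ℝ} (ha : pderiv 0 a = 0) :
    Commute (mulLeft ℝ a) dX :=
  (MvPolynomial.commute_mulLeft_pderiv ha).add_right (commute_mulLeft_mulLeft _ _)

theorem commute_dC_mulLeft {a : MvPolynomial (Fin 2) ℝ} (ha : pderiv 1 a = 0) :
    Commute dC (mulLeft ℝ a) :=
  (MvPolynomial.commute_mulLeft_pderiv ha).symm.sub_left (commute_mulLeft_mulLeft _ _)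

theorem commute_dYY_opB : Commute dYY (opB (X 0) dX) := by
  have hc (a : MvPolynomial (Fin 2) ℝ) (ha : pderiv 0 a = 0) :
      Commute (mulLeft ℝ a) (opB (X 0) dX) :=
    (commute_mulLeft_mulLeft _ _).opB_right (commute_mulLeft_dX ha)
  have hC : Commute dC (opB (X 0) dX) := (commute_dC_mulLeft (by simp)).opB_right commute_dC_dX
  exact ((hc _ (by simp)).mul_left hC).add_left ((hc _ (by simp)).mul_left (hC.pow_left 2))

theorem dYY_one : dYY 1 = opB (X 0) dX 1 := by
  simp only [dYY, dC, dX, opB_apply, sq, LinearMap.add_apply, LinearMap.sub_apply,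
    Module.End.mul_apply, Derivation.coeFn_coe, Derivation.map_one_eq_zero, mulLeft_apply, map_neg,
    map_sub, mul_one, zero_sub, zero_add,
    MvPolynomial.pderiv_X, ne_eq, zero_ne_one, one_ne_zero, not_false_eq_true, Pi.single_eq_of_ne]
  ring

theorem dYY_pow_one (n : ℕ) : (dYY ^ n) 1 = (opB (X 0) dX ^ n) 1 :=
  commute_dYY_opB.pow_apply_eq dYY_one n

noncomputable def evalCAtOne : MvPolynomial (Fin 2) ℝ →ₐ[ℝ] Polynomial ℝ :=
  aeval ![Polynomial.X, 1]

theorem derivative_comp_evalCAtOne :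
    Polynomial.derivative ∘ₗ evalCAtOne.toLinearMap = evalCAtOne.toLinearMap ∘ₗ dX := by
  refine LinearMap.ext fun P => ?_
  simp [evalCAtOne, dX, MvPolynomial.derivative_aeval, Fin.sum_univ_two]

theorem evalCAtOne_opB_pow_one (n : ℕ) :
    evalCAtOne ((opB (X 0) dX ^ n) 1) = (opB Polynomial.X Polynomial.derivative ^ n) 1 := by
  have h := Module.End.commute_pow_left_of_commute
    (opB_comp_algHom evalCAtOne derivative_comp_evalCAtOne (X 0)) n
  simpa [evalCAtOne] using congr($h 1).symm

noncomputable def evalCoshMulExp (x : ℝ) (P : MvPolynomial (Fin 2) ℝ) (t : ℝ) : ℝ :=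
  MvPolynomial.eval ![x, cosh t] P * exp (x * (1 - cosh t))

theorem evalCoshMulExp_one (x : ℝ) : evalCoshMulExp x 1 = fun t => exp (x * (1 - cosh t)) := by
  funext t
  simp [evalCoshMulExp]

theorem evalCoshMulExp_zero (x : ℝ) (P : MvPolynomial (Fin 2) ℝ) :
    evalCoshMulExp x P 0 = (evalCAtOne P).eval x := by
  have hv : (fun i => (![Polynomial.X, 1] i).eval x) = ![x, 1] := by
    ext i; fin_cases i <;> simp
  simp [evalCoshMulExp, evalCAtOne, MvPolynomial.polynomial_eval_aeval, hv]

theorem hasDerivAt_eval_cosh (x : ℝ) (P : MvPolynomial (Fin 2) ℝ) (y : ℝ) :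
    HasDerivAt (fun t => MvPolynomial.eval ![x, cosh t] P)
      (MvPolynomial.eval ![x, cosh y] (pderiv 1 P) * sinh y) y := by
  have hv c : (fun i => (![Polynomial.C x, Polynomial.X] i).eval c) = ![x, c] := by
    ext i; fin_cases i <;> simp
  have h := ((aeval ![Polynomial.C x, Polynomial.X] P).hasDerivAt (cosh y)).comp y
    (hasDerivAt_cosh y)
  simpa [Function.comp_def, MvPolynomial.polynomial_eval_aeval, MvPolynomial.derivative_aeval,
    Fin.sum_univ_two, hv] using h

theorem hasDerivAt_evalCoshMulExp (x : ℝ) (P : MvPolynomial (Fin 2) ℝ) (y : ℝ) :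
    HasDerivAt (evalCoshMulExp x P) (sinh y * evalCoshMulExp x (dC P) y) y := by
  have hexp := (((hasDerivAt_cosh y).const_sub 1).const_mul x).exp
  refine ((hasDerivAt_eval_cosh x P y).mul hexp).congr_deriv ?_
  simp only [evalCoshMulExp, dC, LinearMap.sub_apply, Derivation.coeFn_coe, mulLeft_apply, map_sub,
    map_mul, MvPolynomial.eval_X, Matrix.cons_val_zero]
  ring

theorem deriv_deriv_evalCoshMulExp (x : ℝ) (P : MvPolynomial (Fin 2) ℝ) :
    deriv (deriv (evalCoshMulExp x P)) = evalCoshMulExp x (dYY P) := by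
  have hd Q : deriv (evalCoshMulExp x Q) = fun t => sinh t * evalCoshMulExp x (dC Q) t :=
    funext fun t => (hasDerivAt_evalCoshMulExp x Q t).deriv
  funext y
  have h : HasDerivAt (fun t => sinh t * evalCoshMulExp x (dC P) t) _ y :=
    (hasDerivAt_sinh y).mul (hasDerivAt_evalCoshMulExp x (dC P) y)
  rw [hd, h.deriv]
  simp only [evalCoshMulExp, dYY, sq, LinearMap.add_apply, Module.End.mul_apply, mulLeft_apply,
    map_add, map_mul, map_sub, map_one, MvPolynomial.eval_X, Matrix.cons_val_one,
    Matrix.cons_val_fin_one]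
  linear_combination
    (MvPolynomial.eval ![x, cosh y] (dC (dC P)) * exp (x * (1 - cosh y))) * sinh_sq y

theorem iteratedDeriv_two_mul_evalCoshMulExp (x : ℝ) (n : ℕ) (P : MvPolynomial (Fin 2) ℝ) :
    iteratedDeriv (2 * n) (evalCoshMulExp x P) = evalCoshMulExp x ((dYY ^ n) P) := by
  induction n with
  | zero => simp
  | succ n ih =>
    rw [Nat.mul_succ, iteratedDeriv_succ, iteratedDeriv_succ, ih, deriv_deriv_evalCoshMulExp,
      pow_succ', Module.End.mul_apply]

theorem iteratedDeriv_two_mul_add_one_evalCoshMulExp_zero (x : ℝ) (n : ℕ)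
    (P : MvPolynomial (Fin 2) ℝ) : iteratedDeriv (2 * n + 1) (evalCoshMulExp x P) 0 = 0 := by
  rw [iteratedDeriv_succ, iteratedDeriv_two_mul_evalCoshMulExp,
    (hasDerivAt_evalCoshMulExp x _ 0).deriv, sinh_zero, zero_mul]

theorem hasDerivAt_exp_neg_mul_eval (r : Polynomial ℝ) (t : ℝ) :
    HasDerivAt (fun s => exp (-s) * r.eval s)
      (exp (-t) * (Polynomial.derivative r - r).eval t) t := by
  refine ((hasDerivAt_neg t).exp.mul (r.hasDerivAt t)).congr_deriv ?_
  rw [Polynomial.eval_sub]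
  ring

theorem opA_exp_neg_mul_eval (r : Polynomial ℝ) :
    opA (fun t => exp (-t) * r.eval t) =
      fun t => exp (-t) * (-opB Polynomial.X Polynomial.derivative r).eval t := by
  have hd q : deriv (fun s => exp (-s) * q.eval s) =
      fun t => exp (-t) * (Polynomial.derivative q - q).eval t :=
    funext fun t => (hasDerivAt_exp_neg_mul_eval q t).deriv
  have hX : (fun y => y * (exp (-y) * (Polynomial.derivative r - r).eval y)) =
      fun y => exp (-y) * (Polynomial.X * (Polynomial.derivative r - r)).eval y := by
    funext y
    rw [Polynomial.eval_mul, Polynomial.eval_X]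
    ring
  funext t
  simp only [opA, hd, hX]
  simp only [opB_apply, Polynomial.derivative_mul, Polynomial.derivative_X, Polynomial.derivative_sub,
    Polynomial.eval_sub, Polynomial.eval_add, Polynomial.eval_mul, Polynomial.eval_neg,
    Polynomial.eval_X, Polynomial.eval_pow, Polynomial.eval_ofNat, one_mul]
  ring

theorem opA_iterate_exp_neg (n : ℕ) :
    opA^[n] (fun t => exp (-t)) =
      fun t => exp (-t) * (((-opB Polynomial.X Polynomial.derivative) ^ n) 1).eval t := by
  induction n with
  | zero => simp
  | succ n ih =>
    rw [Function.iterate_succ_apply', ih, opA_exp_neg_mul_eval, pow_succ', Module.End.mul_apply]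
    rfl

theorem p_eq_eval (n : ℕ) (x : ℝ) :
    p n x = ((opB Polynomial.X Polynomial.derivative ^ n) 1).eval x := by
  have hsign : ((-1 : ℝ) ^ n) * (-1) ^ n = 1 := by rw [← mul_pow]; norm_num
  have hexp : exp x * exp (-x) = 1 := by rw [← exp_add, add_neg_cancel, exp_zero]
  simp only [p, opA_iterate_exp_neg, ← neg_one_smul ℝ (opB _ _), smul_pow, LinearMap.smul_apply,
    Polynomial.eval_smul, smul_eq_mul]
  linear_combination ((opB Polynomial.X Polynomial.derivative ^ n) 1).eval x *
    (exp x * exp (-x) * hsign + hexp)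

/-- Generating function: `exp(−2x sinh²(y/2)) = Σ p_n(x) y^{2n}/(2n)!` for `y` near `0`. -/
theorem p_generating_function (x : ℝ) :
    ∃ r : ℝ, 0 < r ∧ ∀ y : ℝ, |y| < r →
      HasSum (fun n : ℕ => p n x * y^(2*n) / (2*n).factorial)
        (Real.exp (-2 * x * (Real.sinh (y/2))^2)) := by
  have hg : AnalyticAt ℝ (evalCoshMulExp x 1) 0 := by
    rw [evalCoshMulExp_one]
    exact analyticAt_rexp.comp (analyticAt_const.mul (analyticAt_const.sub analyticAt_cosh))
  obtain ⟨r, hr, hsum⟩ := hg.exists_hasSum_iteratedDeriv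
  refine ⟨r, hr, fun y hy => ?_⟩
  have h := (hsum y hy).even_of_odd_eq_zero fun n => by
    simp [iteratedDeriv_two_mul_add_one_evalCoshMulExp_zero]
  have hval : evalCoshMulExp x 1 y = exp (-2 * x * sinh (y / 2) ^ 2) := by
    have h2 := cosh_two_mul (y / 2)
    rw [mul_div_cancel₀ y two_ne_zero, cosh_sq] at h2
    simp only [evalCoshMulExp_one, h2]
    ring_nf
  rw [zero_add, hval] at h
  have hterm (n : ℕ) : p n x * y ^ (2 * n) / (2 * n).factorial =
      ((2 * n).factorial : ℝ)⁻¹ • y ^ (2 * n) • iteratedDeriv (2 * n) (evalCoshMulExp x 1) 0 := by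
    rw [iteratedDeriv_two_mul_evalCoshMulExp, evalCoshMulExp_zero, dYY_pow_one,
      evalCAtOne_opB_pow_one, p_eq_eval, smul_eq_mul, smul_eq_mul]
    ring
  simpa only [hterm] using h
end
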